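/- For all θ ∈ ℝ and all μ, ν ∈ {−1,+1}, Bob's expected local energy in the normalized post-measurement state satisfies Tr[ρ(μ,ν,θ)·(H₂ + V)] = (1/√(h²+k²))·[−μν·h·k·sin 2θ + (h² + 2k²)·(1 − cos 2θ)]. -/

import Mathlib

open Matrix Kronecker
open scoped ComplexOrder

noncomputable section

abbrev M2 : Type := Matrix (Fin 2) (Fin 2) ℂ
abbrev M4 : Type := Matrix (Fin 2 × Fin 2) (Fin 2 × Fin 2) ℂ

/-- Pauli X matrix. -/
def σx : M2 := !![0, 1; 1, 0]
/-- Pauli Y matrix. -/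
def σy : M2 := !![0, -Complex.I; Complex.I, 0]
/-- Pauli Z matrix. -/
def σz : M2 := !![1, 0; 0, -1]

def X1 : M4 := σx ⊗ₖ (1 : M2)
def Z1 : M4 := σz ⊗ₖ (1 : M2)
def Z2 : M4 := (1 : M2) ⊗ₖ σz
def Y2 : M4 := (1 : M2) ⊗ₖ σy
def XX : M4 := σx ⊗ₖ σx

def H1m (k h : ℝ) : M4 := (h : ℂ) • Z1 + ((h ^ 2 / Real.sqrt (h ^ 2 + k ^ 2) : ℝ) : ℂ) • (1 : M4)
def H2m (k h : ℝ) : M4 := (h : ℂ) • Z2 + ((h ^ 2 / Real.sqrt (h ^ 2 + k ^ 2) : ℝ) : ℂ) • (1 : M4)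
def Vm (k h : ℝ) : M4 :=
  ((2 * k : ℝ) : ℂ) • XX + ((2 * k ^ 2 / Real.sqrt (h ^ 2 + k ^ 2) : ℝ) : ℂ) • (1 : M4)
def Hm (k h : ℝ) : M4 := H1m k h + H2m k h + Vm k h

def e00 : (Fin 2 × Fin 2) → ℂ := fun p => if p = (0, 0) then 1 else 0
def e11 : (Fin 2 × Fin 2) → ℂ := fun p => if p = (1, 1) then 1 else 0

/-- the ground state of the minimal QET Hamiltonian -/
def gs (k h : ℝ) : (Fin 2 × Fin 2) → ℂ := fun p =>
  ((1 / Real.sqrt 2 * Real.sqrt (1 - h / Real.sqrt (h ^ 2 + k ^ 2)) : ℝ) : ℂ) * e00 p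
  - ((1 / Real.sqrt 2 * Real.sqrt (1 + h / Real.sqrt (h ^ 2 + k ^ 2)) : ℝ) : ℂ) * e11 p

/-- the rank-one operator |g⟩⟨g| -/
def gProj (k h : ℝ) : M4 := Matrix.vecMulVec (gs k h) (star (gs k h))

/-- Alice's projective measurement operator -/
def PA (μ : ℝ) : M4 := (2 : ℂ)⁻¹ • ((1 : M4) + (μ : ℂ) • X1)

/-- Bob's conditional unitary -/
def UB (ν θ : ℝ) : M4 :=
  ((Real.cos θ : ℝ) : ℂ) • (1 : M4) - ((Complex.I * ν * Real.sin θ) : ℂ) • Y2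

/-- the post-protocol state -/
def ρQET (k h θ : ℝ) : M4 :=
  UB (-1) θ * PA (-1) * gProj k h * PA (-1) * (UB (-1) θ)ᴴ
  + UB 1 θ * PA 1 * gProj k h * PA 1 * (UB 1 θ)ᴴ

/-- the normalized post-measurement state with prover outcome μ and verifier operation UB ν θ -/
def ρMN (k h μ ν θ : ℝ) : M4 := (2 : ℂ) • (UB ν θ * PA μ * gProj k h * PA μ * (UB ν θ)ᴴ)

/-! Alice's projection turns the entangled ground state `α|00⟩ - β|11⟩` into the product state
`½(|0⟩ + μ|1⟩) ⊗ (α|0⟩ - μβ|1⟩)` (this uses `μ² = 1`), and Bob's unitary acts on the second factor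
as a real rotation by `νθ`, which conjugates `(Z, X)` into their rotation by `2θ`. The energy
`h Z₂ + 2k X₁X₂ + const` then factorises into one-qubit expectation values: Alice's qubit has
`⟨X⟩ = μ`, Bob's qubit has `⟨Z⟩ = -h/r` and `⟨X⟩ = -2μαβ = -μk/r`. -/

section General

variable {α : Type*} {m n m' n' : Type*}

def tensorVec [Mul α] (x : m → α) (y : n → α) : m × n → α := fun p => x p.1 * y p.2

def expVal [NonUnitalNonAssocSemiring α] [Star α] [Fintype n] (A : Matrix n n α) (v : n → α) : α :=
  star v ⬝ᵥ A *ᵥ v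

section CommSemiring

variable [CommSemiring α]

theorem kronecker_mulVec_tensorVec [Fintype m'] [Fintype n'] (A : Matrix m m' α)
    (B : Matrix n n' α) (x : m' → α) (y : n' → α) :
    (A ⊗ₖ B) *ᵥ tensorVec x y = tensorVec (A *ᵥ x) (B *ᵥ y) := by
  ext ⟨i, j⟩
  simp only [mulVec, dotProduct, tensorVec, kroneckerMap_apply, Fintype.sum_prod_type,
    Finset.sum_mul_sum]
  exact Finset.sum_congr rfl fun _ _ => Finset.sum_congr rfl fun _ _ => mul_mul_mul_comm _ _ _ _

theorem tensorVec_dotProduct_tensorVec [Fintype m] [Fintype n] (x u : m → α) (y v : n → α) :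
    tensorVec x y ⬝ᵥ tensorVec u v = (x ⬝ᵥ u) * (y ⬝ᵥ v) := by
  simp only [dotProduct, tensorVec, Fintype.sum_prod_type, Finset.sum_mul_sum]
  exact Finset.sum_congr rfl fun _ _ => Finset.sum_congr rfl fun _ _ => mul_mul_mul_comm _ _ _ _

variable [StarRing α]

theorem star_tensorVec (x : m → α) (y : n → α) :
    star (tensorVec x y) = tensorVec (star x) (star y) :=
  funext fun _ => star_mul' _ _

theorem expVal_add [Fintype n] (A B : Matrix n n α) (v : n → α) :
    expVal (A + B) v = expVal A v + expVal B v := by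
  simp only [expVal, add_mulVec, dotProduct_add]

theorem expVal_smul [Fintype n] (c : α) (A : Matrix n n α) (v : n → α) :
    expVal (c • A) v = c * expVal A v := by
  simp only [expVal, smul_mulVec, dotProduct_smul, smul_eq_mul]

theorem expVal_kronecker_tensorVec [Fintype m] [Fintype n] (A : Matrix m m α)
    (B : Matrix n n α) (x : m → α) (y : n → α) :
    expVal (A ⊗ₖ B) (tensorVec x y) = expVal A x * expVal B y := by
  rw [expVal, kronecker_mulVec_tensorVec, star_tensorVec, tensorVec_dotProduct_tensorVec]; rfl

theorem expVal_mulVec [Fintype m] [Fintype n] (A : Matrix m m α) (U : Matrix m n α)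
    (v : n → α) : expVal A (U *ᵥ v) = expVal (Uᴴ * A * U) v := by
  rw [expVal, expVal, star_mulVec, ← dotProduct_mulVec, mulVec_mulVec, mulVec_mulVec]

theorem trace_vecMulVec_star_mul [Fintype n] (v : n → α) (A : Matrix n n α) :
    (vecMulVec v (star v) * A).trace = expVal A v := by
  rw [vecMulVec_mul, trace_vecMulVec, dotProduct_comm, ← dotProduct_mulVec]; rfl

theorem mul_vecMulVec_star_mul_conjTranspose [Fintype n] (U : Matrix m n α) (v : n → α) :
    U * vecMulVec v (star v) * Uᴴ = vecMulVec (U *ᵥ v) (star (U *ᵥ v)) := by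
  rw [mul_vecMulVec, vecMulVec_mul, star_mulVec]

end CommSemiring

theorem expVal_sub [CommRing α] [StarRing α] [Fintype n] (A B : Matrix n n α)
    (v : n → α) : expVal (A - B) v = expVal A v - expVal B v := by
  simp only [expVal, sub_mulVec, dotProduct_sub]

end General

theorem σx_conjTranspose : σxᴴ = σx := by
  ext i j
  fin_cases i <;> fin_cases j <;> simp [σx]

theorem expVal_one_ofReal (p q : ℝ) : expVal 1 ![(p : ℂ), (q : ℂ)] = ((p ^ 2 + q ^ 2 : ℝ) : ℂ) := by
  simp only [expVal, one_mulVec, dotProduct, Fin.sum_univ_two, Pi.star_apply, cons_val_zero,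
    cons_val_one, cons_val_fin_one, Complex.star_def, Complex.conj_ofReal]
  push_cast; ring

theorem expVal_σz_ofReal (p q : ℝ) : expVal σz ![(p : ℂ), (q : ℂ)] = ((p ^ 2 - q ^ 2 : ℝ) : ℂ) := by
  simp only [expVal, σz, mulVec, dotProduct, Fin.sum_univ_two, Pi.star_apply, of_apply,
    cons_val', cons_val_zero, cons_val_one, cons_val_fin_one, Complex.star_def, Complex.conj_ofReal]
  push_cast; ring

theorem expVal_σx_ofReal (p q : ℝ) : expVal σx ![(p : ℂ), (q : ℂ)] = ((2 * p * q : ℝ) : ℂ) := by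
  simp only [expVal, σx, mulVec, dotProduct, Fin.sum_univ_two, Pi.star_apply, of_apply,
    cons_val', cons_val_zero, cons_val_one, cons_val_fin_one, Complex.star_def, Complex.conj_ofReal]
  push_cast; ring

def bobRot (ν θ : ℝ) : M2 :=
  !![(Real.cos θ : ℂ), -((ν * Real.sin θ : ℝ) : ℂ); ((ν * Real.sin θ : ℝ) : ℂ), (Real.cos θ : ℂ)]

theorem bobRot_conj_σz (ν θ : ℝ) (hν : ν ^ 2 = 1) :
    (bobRot ν θ)ᴴ * σz * bobRot ν θ =
      ((Real.cos (2 * θ) : ℝ) : ℂ) • σz - ((ν * Real.sin (2 * θ) : ℝ) : ℂ) • σx := by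
  rw [Real.cos_two_mul', Real.sin_two_mul]
  ext i j
  fin_cases i <;> fin_cases j <;>
    simp [bobRot, σz, σx, mul_apply, Fin.sum_univ_two, -Complex.ofReal_cos, -Complex.ofReal_sin,
      -Complex.ofReal_mul] <;>
    norm_cast <;> grind

theorem bobRot_conj_σx (ν θ : ℝ) (hν : ν ^ 2 = 1) :
    (bobRot ν θ)ᴴ * σx * bobRot ν θ =
      ((ν * Real.sin (2 * θ) : ℝ) : ℂ) • σz + ((Real.cos (2 * θ) : ℝ) : ℂ) • σx := by
  rw [Real.cos_two_mul', Real.sin_two_mul]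
  ext i j
  fin_cases i <;> fin_cases j <;>
    simp [bobRot, σz, σx, mul_apply, Fin.sum_univ_two, -Complex.ofReal_cos, -Complex.ofReal_sin,
      -Complex.ofReal_mul] <;>
    norm_cast <;> grind

theorem bobRot_conj_one (ν θ : ℝ) (hν : ν ^ 2 = 1) :
    (bobRot ν θ)ᴴ * 1 * bobRot ν θ = 1 := by
  ext i j
  fin_cases i <;> fin_cases j <;>
    simp [bobRot, mul_apply, Fin.sum_univ_two, -Complex.ofReal_cos, -Complex.ofReal_sin,
      -Complex.ofReal_mul] <;>
    norm_cast <;> grind [Real.sin_sq_add_cos_sq]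

theorem PA_conjTranspose (μ : ℝ) : (PA μ)ᴴ = PA μ := by
  simp [PA, X1, conjTranspose_kronecker, σx_conjTranspose]

theorem trace_ρMN_mul (k h μ ν θ : ℝ) (A : M4) :
    (ρMN k h μ ν θ * A).trace = 2 * expVal A (UB ν θ *ᵥ (PA μ *ᵥ gs k h)) := by
  have hρ : UB ν θ * PA μ * gProj k h * PA μ * (UB ν θ)ᴴ
      = UB ν θ * PA μ * gProj k h * (UB ν θ * PA μ)ᴴ := by
    rw [conjTranspose_mul, PA_conjTranspose, Matrix.mul_assoc _ (PA μ)]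
  rw [ρMN, hρ, gProj, mul_vecMulVec_star_mul_conjTranspose, Matrix.smul_mul, trace_smul,
    trace_vecMulVec_star_mul, mulVec_mulVec, smul_eq_mul]

theorem UB_eq_one_kronecker_bobRot (ν θ : ℝ) : UB ν θ = (1 : M2) ⊗ₖ bobRot ν θ := by
  ext ⟨i, j⟩ ⟨i', j'⟩
  fin_cases i <;> fin_cases j <;> fin_cases i' <;> fin_cases j' <;>
    simp [UB, Y2, σy, bobRot, one_apply] <;> grind [Complex.I_sq]

theorem H2m_add_Vm_eq_kronecker (k h : ℝ) :
    H2m k h + Vm k h = (h : ℂ) • ((1 : M2) ⊗ₖ σz) + ((2 * k : ℝ) : ℂ) • (σx ⊗ₖ σx)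
      + (((h ^ 2 + 2 * k ^ 2) / Real.sqrt (h ^ 2 + k ^ 2) : ℝ) : ℂ) • ((1 : M2) ⊗ₖ (1 : M2)) := by
  rw [one_kronecker_one, H2m, Vm, Z2, XX, add_div, Complex.ofReal_add, add_smul]
  abel

def gsAmp0 (k h : ℝ) : ℝ := 1 / Real.sqrt 2 * Real.sqrt (1 - h / Real.sqrt (h ^ 2 + k ^ 2))

def gsAmp1 (k h : ℝ) : ℝ := 1 / Real.sqrt 2 * Real.sqrt (1 + h / Real.sqrt (h ^ 2 + k ^ 2))

theorem gs_eq (k h : ℝ) :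
    gs k h = fun p => (gsAmp0 k h : ℂ) * e00 p - (gsAmp1 k h : ℂ) * e11 p :=
  rfl

theorem abs_div_sqrt_sq_add_sq_le_one (h k : ℝ) : |h / Real.sqrt (h ^ 2 + k ^ 2)| ≤ 1 := by
  rw [abs_div, abs_of_nonneg (Real.sqrt_nonneg _)]
  exact div_le_one_of_le₀ (Real.abs_le_sqrt (by nlinarith)) (Real.sqrt_nonneg _)

theorem gsAmp0_sq (k h : ℝ) : gsAmp0 k h ^ 2 = (1 - h / Real.sqrt (h ^ 2 + k ^ 2)) / 2 := by
  have := (abs_le.mp (abs_div_sqrt_sq_add_sq_le_one h k)).2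
  rw [gsAmp0, mul_pow, div_pow, Real.sq_sqrt zero_le_two, Real.sq_sqrt (by linarith)]
  ring

theorem gsAmp1_sq (k h : ℝ) : gsAmp1 k h ^ 2 = (1 + h / Real.sqrt (h ^ 2 + k ^ 2)) / 2 := by
  have := (abs_le.mp (abs_div_sqrt_sq_add_sq_le_one h k)).1
  rw [gsAmp1, mul_pow, div_pow, Real.sq_sqrt zero_le_two, Real.sq_sqrt (by linarith)]
  ring

theorem two_mul_gsAmp0_mul_gsAmp1 {k : ℝ} (hk : 0 < k) (h : ℝ) :
    2 * gsAmp0 k h * gsAmp1 k h = k / Real.sqrt (h ^ 2 + k ^ 2) := by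
  have hr : 0 < Real.sqrt (h ^ 2 + k ^ 2) := Real.sqrt_pos.mpr (by positivity)
  have hr2 : Real.sqrt (h ^ 2 + k ^ 2) ^ 2 = h ^ 2 + k ^ 2 := Real.sq_sqrt (by positivity)
  have hsq : (2 * gsAmp0 k h * gsAmp1 k h) ^ 2 = (k / Real.sqrt (h ^ 2 + k ^ 2)) ^ 2 := by
    rw [mul_pow, mul_pow, gsAmp0_sq, gsAmp1_sq]
    field_simp
    linear_combination hr2
  have hpos : 0 ≤ 2 * gsAmp0 k h * gsAmp1 k h := by
    unfold gsAmp0 gsAmp1; positivity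
  exact (pow_left_inj₀ hpos (by positivity) two_ne_zero).mp hsq

-- Scaled by `1/√2` so that its squared norm is the probability `1/2` of the outcome `μ`.
def aliceState (μ : ℝ) : Fin 2 → ℂ := ![((1 / 2 : ℝ) : ℂ), ((μ / 2 : ℝ) : ℂ)]

def bobState (k h μ : ℝ) : Fin 2 → ℂ := ![(gsAmp0 k h : ℂ), ((-(μ * gsAmp1 k h) : ℝ) : ℂ)]

theorem PA_mulVec_gs (k h : ℝ) {μ : ℝ} (hμ : μ ^ 2 = 1) :
    PA μ *ᵥ gs k h = tensorVec (aliceState μ) (bobState k h μ) := by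
  have hμ' : (μ : ℂ) ^ 2 = 1 := by exact_mod_cast hμ
  ext ⟨i, j⟩
  fin_cases i <;> fin_cases j <;>
    simp [PA, X1, σx, gs_eq, e00, e11, tensorVec, aliceState, bobState, mulVec,
      dotProduct, Fintype.sum_prod_type, one_apply] <;>
    grind

theorem expVal_one_aliceState {μ : ℝ} (hμ : μ ^ 2 = 1) :
    expVal 1 (aliceState μ) = ((1 / 2 : ℝ) : ℂ) := by
  rw [aliceState, expVal_one_ofReal]
  congr 1
  linear_combination hμ / 4

theorem expVal_σx_aliceState (μ : ℝ) : expVal σx (aliceState μ) = ((μ / 2 : ℝ) : ℂ) := by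
  rw [aliceState, expVal_σx_ofReal]
  congr 1
  ring

theorem expVal_one_bobState (k h : ℝ) {μ : ℝ} (hμ : μ ^ 2 = 1) :
    expVal 1 (bobState k h μ) = 1 := by
  rw [bobState, expVal_one_ofReal, ← Complex.ofReal_one]
  congr 1
  linear_combination gsAmp0_sq k h + gsAmp1_sq k h + gsAmp1 k h ^ 2 * hμ

theorem expVal_σz_bobState (k h : ℝ) {μ : ℝ} (hμ : μ ^ 2 = 1) :
    expVal σz (bobState k h μ) = ((-(h / Real.sqrt (h ^ 2 + k ^ 2)) : ℝ) : ℂ) := by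
  rw [bobState, expVal_σz_ofReal]
  congr 1
  linear_combination gsAmp0_sq k h - gsAmp1_sq k h - gsAmp1 k h ^ 2 * hμ

theorem expVal_σx_bobState {k : ℝ} (hk : 0 < k) (h μ : ℝ) :
    expVal σx (bobState k h μ) = ((-(μ * (k / Real.sqrt (h ^ 2 + k ^ 2))) : ℝ) : ℂ) := by
  rw [bobState, expVal_σx_ofReal]
  congr 1
  linear_combination -μ * two_mul_gsAmp0_mul_gsAmp1 hk h

theorem sq_eq_one_of_mem_neg_one_one {x : ℝ} (hx : x ∈ ({-1, 1} : Set ℝ)) : x ^ 2 = 1 := by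
  rcases hx with rfl | rfl <;> norm_num

theorem qet_local_energy_expectation_mu_nu_general (k h : ℝ) (hk : 0 < k) (θ : ℝ)
    (μ ν : ℝ) (hμ : μ ∈ ({-1, 1} : Set ℝ)) (hν : ν ∈ ({-1, 1} : Set ℝ)) :
    (ρMN k h μ ν θ * (H2m k h + Vm k h)).trace =
      ((1 / Real.sqrt (h ^ 2 + k ^ 2) *
        (-(μ * ν * h * k) * Real.sin (2 * θ) +
          (h ^ 2 + 2 * k ^ 2) * (1 - Real.cos (2 * θ))) : ℝ) : ℂ) := by
  have hμ2 := sq_eq_one_of_mem_neg_one_one hμ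
  have hν2 := sq_eq_one_of_mem_neg_one_one hν
  rw [trace_ρMN_mul, PA_mulVec_gs k h hμ2, UB_eq_one_kronecker_bobRot, kronecker_mulVec_tensorVec,
    one_mulVec, H2m_add_Vm_eq_kronecker]
  simp only [expVal_add, expVal_smul, expVal_kronecker_tensorVec, expVal_mulVec,
    bobRot_conj_σz ν θ hν2, bobRot_conj_σx ν θ hν2, bobRot_conj_one ν θ hν2, expVal_sub,
    expVal_one_aliceState hμ2, expVal_σx_aliceState, expVal_one_bobState k h hμ2,
    expVal_σz_bobState k h hμ2, expVal_σx_bobState hk]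
  norm_cast
  linear_combination (-2 * Real.cos (2 * θ) * k ^ 2 / Real.sqrt (h ^ 2 + k ^ 2)) * hμ2

/-- Bob's expected local energy:
`Tr[ρ(μ,ν,θ)·(H₂+V)] = (1/√(h²+k²))·[−μν·hk·sin 2θ + (h²+2k²)·(1 − cos 2θ)]`. -/
theorem qet_local_energy_expectation_mu_nu (k h : ℝ) (hk : 0 < k) (hh : 0 < h) (θ : ℝ)
    (μ ν : ℝ) (hμ : μ ∈ ({-1, 1} : Set ℝ)) (hν : ν ∈ ({-1, 1} : Set ℝ)) :
    (ρMN k h μ ν θ * (H2m k h + Vm k h)).trace =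
      ((1 / Real.sqrt (h ^ 2 + k ^ 2) *
        (-(μ * ν * h * k) * Real.sin (2 * θ) +
          (h ^ 2 + 2 * k ^ 2) * (1 - Real.cos (2 * θ))) : ℝ) : ℂ) :=
  qet_local_energy_expectation_mu_nu_general k h hk θ μ ν hμ hν
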